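/- If (X,d) is a complete metric space such that (d_0)_0 = d_0, then d_0 = d̄, the length metric induced by d. -/

import Mathlib

open Filter Set
open scoped ENNReal

variable {X : Type*}

/-- The length of the chain `x 0, x 1, …, x n` with respect to the distance `ρ`. -/
noncomputable def chainLengthOf (ρ : X → X → ℝ≥0∞) (x : ℕ → X) (n : ℕ) : ℝ≥0∞ :=
  ∑ k ∈ Finset.range n, ρ (x k) (x (k + 1))

/-- `x 0, …, x n` is an `ε`-chain from `p` to `q` with respect to `ρ`. -/
def IsChainOf (ρ : X → X → ℝ≥0∞) (ε : ℝ≥0∞) (p q : X) (x : ℕ → X) (n : ℕ) : Prop :=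
  x 0 = p ∧ x n = q ∧ ∀ k < n, ρ (x k) (x (k + 1)) ≤ ε

/-- `d_ε`: the infimum of lengths of `ε`-chains joining `p` to `q`. -/
noncomputable def chainDistOf (ρ : X → X → ℝ≥0∞) (ε : ℝ≥0∞) (p q : X) : ℝ≥0∞ :=
  ⨅ (n : ℕ) (x : ℕ → X) (_ : IsChainOf ρ ε p q x n), chainLengthOf ρ x n

/-- `d_0 = sup_{ε > 0} d_ε`. -/
noncomputable def chainMetricOf (ρ : X → X → ℝ≥0∞) (p q : X) : ℝ≥0∞ :=
  ⨆ (ε : ℝ≥0∞) (_ : 0 < ε), chainDistOf ρ ε p q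

/-- `d_ε` for a metric space, with `ρ = edist`. -/
noncomputable def chainDist [PseudoEMetricSpace X] (ε : ℝ≥0∞) (p q : X) : ℝ≥0∞ :=
  chainDistOf (fun a b => edist a b) ε p q

/-- `d_0` for a metric space, with `ρ = edist`. -/
noncomputable def chainMetric [PseudoEMetricSpace X] (p q : X) : ℝ≥0∞ :=
  chainMetricOf (fun a b => edist a b) p q

/-- The length of a path `γ : [0,1] → X` with respect to `ρ`:
the supremum over partitions `0 = t 0 ≤ t 1 ≤ … ≤ t n = 1` of the partition sums. -/
noncomputable def pathLengthOf (ρ : X → X → ℝ≥0∞) (γ : ℝ → X) : ℝ≥0∞ :=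
  ⨆ (n : ℕ) (t : ℕ → ℝ) (_ : t 0 = 0 ∧ t n = 1 ∧ Monotone t),
    ∑ k ∈ Finset.range n, ρ (γ (t k)) (γ (t (k + 1)))

noncomputable def pathLength [PseudoEMetricSpace X] (γ : ℝ → X) : ℝ≥0∞ :=
  pathLengthOf (fun a b => edist a b) γ

/-- Continuity of a path `γ` on `[0,1]` with respect to the distance `ρ`. -/
def ContinuousWrt (ρ : X → X → ℝ≥0∞) (γ : ℝ → X) : Prop :=
  ∀ t ∈ Icc (0 : ℝ) 1,
    Tendsto (fun s => ρ (γ s) (γ t)) (nhdsWithin t (Icc (0 : ℝ) 1)) (nhds 0)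

/-- The induced length metric with respect to `ρ`: the infimum of `ρ`-lengths of
`ρ`-continuous paths joining `p` to `q`. -/
noncomputable def lengthMetricOf (ρ : X → X → ℝ≥0∞) (p q : X) : ℝ≥0∞ :=
  ⨅ (γ : ℝ → X) (_ : ContinuousWrt ρ γ ∧ γ 0 = p ∧ γ 1 = q), pathLengthOf ρ γ

/-- The induced length metric `d̄` of a metric space. -/
noncomputable def lengthMetric [PseudoEMetricSpace X] (p q : X) : ℝ≥0∞ :=
  lengthMetricOf (fun a b => edist a b) p q

/-!
`d_0 ≤ d̄`: a path on `[0,1]` is uniformly continuous, so a fine uniform partition of it is an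
`ε`-chain, whose length is at most the length of the path.

`d̄ ≤ d_0`: since `(d_0)_0 = d_0`, a short `d_0`-chain with small steps from `a` to `b` has a point
near its middle, which is an approximate `d_0`-midpoint of `a` and `b`. Inserting approximate
midpoints with tolerance `δ / 4 ^ (n + 1)` at level `n` yields a dyadic net whose consecutive
points at level `n` are `(d_0(p,q) + δ) / 2 ^ n` apart. Since `d ≤ d_0` and `X` is complete, the net
converges to a `(d_0(p,q) + δ)`-Lipschitz path from `p` to `q`.
-/

open Topology
open scoped NNReal

section Chains

variable {ρ : X → X → ℝ≥0∞} {ε : ℝ≥0∞} {p q r : X}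

theorem le_sum_Ico_of_triangle (hself : ∀ a, ρ a a = 0) (htri : ∀ a b c, ρ a c ≤ ρ a b + ρ b c)
    (x : ℕ → X) {i j : ℕ} (hij : i ≤ j) :
    ρ (x i) (x j) ≤ ∑ k ∈ Finset.Ico i j, ρ (x k) (x (k + 1)) := by
  induction j, hij using Nat.le_induction with
  | base => simp [hself]
  | succ j hij ih =>
    rw [Finset.sum_Ico_succ_top hij]
    exact (htri _ (x j) _).trans (add_le_add_left ih _)

theorem chainDistOf_le_chainLengthOf {x : ℕ → X} {n : ℕ} (hx : IsChainOf ρ ε p q x n) :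
    chainDistOf ρ ε p q ≤ chainLengthOf ρ x n :=
  iInf_le_of_le n (iInf_le_of_le x (iInf_le_of_le hx le_rfl))

theorem exists_isChainOf_chainLengthOf_lt {c : ℝ≥0∞} (h : chainDistOf ρ ε p q < c) :
    ∃ n x, IsChainOf ρ ε p q x n ∧ chainLengthOf ρ x n < c := by
  simpa [chainDistOf, iInf_lt_iff] using h

def chainAppend (x : ℕ → X) (m : ℕ) (y : ℕ → X) (k : ℕ) : X :=
  if k ≤ m then x k else y (k - m)

theorem chainAppend_of_le {x y : ℕ → X} {m k : ℕ} (hk : k ≤ m) : chainAppend x m y k = x k :=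
  if_pos hk

theorem chainAppend_add {x y : ℕ → X} {m : ℕ} (hxy : x m = y 0) (k : ℕ) :
    chainAppend x m y (m + k) = y k := by
  rcases k.eq_zero_or_pos with rfl | hk
  · simp [chainAppend, hxy]
  · rw [chainAppend, if_neg (by omega), Nat.add_sub_cancel_left]

theorem IsChainOf.append {x y : ℕ → X} {m n : ℕ} (hx : IsChainOf ρ ε p r x m)
    (hy : IsChainOf ρ ε r q y n) : IsChainOf ρ ε p q (chainAppend x m y) (m + n) := by
  have hxy : x m = y 0 := hx.2.1.trans hy.1.symm
  refine ⟨(chainAppend_of_le m.zero_le).trans hx.1, (chainAppend_add hxy n).trans hy.2.1,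
    fun k hk => ?_⟩
  rcases lt_or_ge k m with hkm | hkm
  · rw [chainAppend_of_le hkm.le, chainAppend_of_le hkm]
    exact hx.2.2 k hkm
  · obtain ⟨j, rfl⟩ := Nat.exists_eq_add_of_le hkm
    rw [chainAppend_add hxy, add_assoc, chainAppend_add hxy]
    exact hy.2.2 j (by omega)

theorem chainLengthOf_chainAppend {x y : ℕ → X} {m : ℕ} (hxy : x m = y 0) (n : ℕ) :
    chainLengthOf ρ (chainAppend x m y) (m + n) = chainLengthOf ρ x m + chainLengthOf ρ y n := by
  rw [chainLengthOf, Finset.sum_range_add]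
  congr 1
  · refine Finset.sum_congr rfl fun k hk => ?_
    rw [Finset.mem_range] at hk
    rw [chainAppend_of_le hk.le, chainAppend_of_le hk]
  · refine Finset.sum_congr rfl fun k _ => ?_
    rw [chainAppend_add hxy, add_assoc, chainAppend_add hxy]

theorem chainDistOf_triangle (ρ : X → X → ℝ≥0∞) (ε : ℝ≥0∞) (p r q : X) :
    chainDistOf ρ ε p q ≤ chainDistOf ρ ε p r + chainDistOf ρ ε r q :=
  ENNReal.le_iInf_add_iInf fun _ n => ENNReal.le_iInf_add_iInf fun _ _ =>
    ENNReal.le_iInf_add_iInf fun hx hy =>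
      chainLengthOf_chainAppend (ρ := ρ) (hx.2.1.trans hy.1.symm) n ▸
        chainDistOf_le_chainLengthOf (hx.append hy)

theorem chainDistOf_self (ε : ℝ≥0∞) (a : X) :
    chainDistOf ρ ε a a = 0 :=
  nonpos_iff_eq_zero.1 <| (chainDistOf_le_chainLengthOf (x := fun _ => a) (n := 0)
    ⟨rfl, rfl, fun k hk => absurd hk k.not_lt_zero⟩).trans_eq (by simp [chainLengthOf])

theorem chainDistOf_le_chainMetricOf (hε : 0 < ε) (p q : X) :
    chainDistOf ρ ε p q ≤ chainMetricOf ρ p q :=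
  le_iSup₂ (f := fun ε (_ : 0 < ε) => chainDistOf ρ ε p q) ε hε

theorem chainMetricOf_triangle (ρ : X → X → ℝ≥0∞) (p r q : X) :
    chainMetricOf ρ p q ≤ chainMetricOf ρ p r + chainMetricOf ρ r q :=
  iSup₂_le fun _ hε => (chainDistOf_triangle ρ _ p r q).trans <|
    add_le_add (chainDistOf_le_chainMetricOf hε p r) (chainDistOf_le_chainMetricOf hε r q)

theorem chainMetricOf_self (a : X) : chainMetricOf ρ a a = 0 := by
  simp [chainMetricOf, chainDistOf_self]

theorem exists_near_midpoint_of_isChainOf (hself : ∀ a, ρ a a = 0)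
    (htri : ∀ a b c, ρ a c ≤ ρ a b + ρ b c) {x : ℕ → X} {n : ℕ} (hx : IsChainOf ρ ε p q x n) :
    ∃ m, ρ p m ≤ chainLengthOf ρ x n / 2 ∧ ρ m q ≤ ε + chainLengthOf ρ x n / 2 := by
  set L := chainLengthOf ρ x n
  classical
  -- the midpoint is the last point of the chain before half of its length is used up
  set k := Nat.findGreatest (fun k => chainLengthOf ρ x k ≤ L / 2) n
  have hkn : k ≤ n := Nat.findGreatest_le n
  have hk : chainLengthOf ρ x k ≤ L / 2 :=
    Nat.findGreatest_spec (P := fun k => chainLengthOf ρ x k ≤ L / 2) n.zero_le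
      (by simp [chainLengthOf])
  refine ⟨x k, ?_, ?_⟩
  · have := le_sum_Ico_of_triangle hself htri x k.zero_le
    rw [hx.1, ← Finset.range_eq_Ico] at this
    exact this.trans hk
  rcases hkn.eq_or_lt with hkn | hkn
  · rw [hkn, hx.2.1, hself]
    exact zero_le
  have hhalf : L / 2 < chainLengthOf ρ x (k + 1) :=
    not_le.1 (Nat.findGreatest_is_greatest k.lt_succ_self hkn)
  set T := ∑ i ∈ Finset.Ico (k + 1) n, ρ (x i) (x (i + 1))
  have hsplit : chainLengthOf ρ x (k + 1) + T = L :=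
    Finset.sum_range_add_sum_Ico _ hkn
  have hT : T ≤ L / 2 := by
    by_contra! hT
    have := ENNReal.add_lt_add hhalf hT
    rw [ENNReal.add_halves, hsplit] at this
    exact this.false
  calc ρ (x k) q ≤ ∑ i ∈ Finset.Ico k n, ρ (x i) (x (i + 1)) :=
        hx.2.1 ▸ le_sum_Ico_of_triangle hself htri x hkn.le
    _ = ρ (x k) (x (k + 1)) + T := Finset.sum_eq_sum_Ico_succ_bot hkn _
    _ ≤ ε + L / 2 := add_le_add (hx.2.2 k hkn) hT

end Chains

section PseudoEMetric

variable [PseudoEMetricSpace X]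

theorem chainMetric_self (a : X) : chainMetric a a = 0 :=
  chainMetricOf_self a

theorem chainMetric_triangle (p r q : X) : chainMetric p q ≤ chainMetric p r + chainMetric r q :=
  chainMetricOf_triangle _ p r q

theorem edist_le_chainDist (ε : ℝ≥0∞) (p q : X) : edist p q ≤ chainDist ε p q :=
  le_iInf₂ fun n x => le_iInf fun hx => hx.1 ▸ hx.2.1 ▸ edist_le_range_sum_edist x n

theorem edist_le_chainMetric (p q : X) : edist p q ≤ chainMetric p q :=
  (edist_le_chainDist 1 p q).trans (chainDistOf_le_chainMetricOf one_pos p q)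

theorem continuousWrt_edist_iff {γ : ℝ → X} :
    ContinuousWrt (fun a b => edist a b) γ ↔ ContinuousOn γ (Icc 0 1) :=
  forall₂_congr fun _ _ => tendsto_iff_edist_tendsto_0.symm

theorem pathLength_le_eVariationOn (γ : ℝ → X) : pathLength γ ≤ eVariationOn γ (Icc 0 1) := by
  refine iSup₂_le fun n t => iSup_le fun ⟨h0, hn, ht⟩ => ?_
  have hmem : ∀ k ∈ Icc 0 n, t k ∈ Icc (0 : ℝ) 1 := fun k hk =>
    ⟨h0 ▸ ht hk.1, hn ▸ ht hk.2⟩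
  simpa only [Finset.range_eq_Ico, edist_comm] using
    eVariationOn.sum_le_of_monotoneOn_Icc (f := γ) (ht.monotoneOn _) hmem

theorem LipschitzOnWith.pathLength_le {γ : ℝ → X} {K : ℝ≥0}
    (hγ : LipschitzOnWith K γ (Icc 0 1)) : pathLength γ ≤ K := by
  simpa using (pathLength_le_eVariationOn γ).trans (hγ.comp_eVariationOn_le (g := id) (mapsTo_id _))

theorem lengthMetric_le_of_lipschitzOnWith {γ : ℝ → X} {K : ℝ≥0}
    (hγ : LipschitzOnWith K γ (Icc 0 1)) : lengthMetric (γ 0) (γ 1) ≤ K :=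
  (iInf₂_le γ ⟨continuousWrt_edist_iff.2 hγ.continuousOn, rfl, rfl⟩).trans hγ.pathLength_le

theorem chainMetric_le_pathLength {γ : ℝ → X} (hγ : ContinuousOn γ (Icc 0 1)) :
    chainMetric (γ 0) (γ 1) ≤ pathLength γ := by
  refine iSup₂_le fun ε hε => ?_
  obtain ⟨δ, hδ, hγδ⟩ := EMetric.uniformContinuousOn_iff.1
    (isCompact_Icc.uniformContinuousOn_of_continuous hγ) ε hε
  obtain ⟨N, hN⟩ := ENNReal.exists_inv_nat_lt hδ.ne'
  have hN0 : (N : ℝ) ≠ 0 := by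
    rintro h
    simp [Nat.cast_eq_zero.1 h] at hN
  set t : ℕ → ℝ := fun k => min (k / N) 1
  have ht : Monotone t := fun i j hij => min_le_min_right 1 (by gcongr)
  have htI : ∀ k, t k ∈ Icc (0 : ℝ) 1 := fun k =>
    ⟨le_min (by positivity) zero_le_one, min_le_right _ _⟩
  have hstep : ∀ k : ℕ, edist (t k) (t (k + 1)) < δ := by
    intro k
    calc edist (t k) (t (k + 1)) ≤ edist ((k : ℝ) / N) ((k + 1 : ℕ) / N) := by
          simpa [t] using
            (LipschitzWith.id.min_const 1).edist_le_mul ((k : ℝ) / N) ((k + 1 : ℕ) / N)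
      _ = (N : ℝ≥0∞)⁻¹ := by
          rw [edist_dist, Real.dist_eq, Nat.cast_succ, ← sub_div, sub_add_cancel_left, abs_div,
            abs_neg, abs_one, Nat.abs_cast, one_div, ENNReal.ofReal_inv_of_pos (by positivity),
            ENNReal.ofReal_natCast]
      _ < δ := hN
  have hchain : IsChainOf (fun a b => edist a b) ε (γ 0) (γ 1) (γ ∘ t) N :=
    ⟨by simp [t], by simp [t, hN0], fun k _ => (hγδ (htI k) (htI (k + 1)) (hstep k)).le⟩
  exact (chainDistOf_le_chainLengthOf hchain).trans
    (le_iSup₂_of_le N t (le_iSup_of_le ⟨by simp [t], by simp [t, hN0], ht⟩ le_rfl))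

theorem chainMetric_le_lengthMetric (p q : X) : chainMetric p q ≤ lengthMetric p q :=
  le_iInf₂ fun _ ⟨hγ, h0, h1⟩ => h0 ▸ h1 ▸ chainMetric_le_pathLength (continuousWrt_edist_iff.1 hγ)

end PseudoEMetric

def dyadicNet (mid : ℕ → X → X → X) (p q : X) : ℕ → ℕ → X
  | 0 => fun k => if k = 0 then p else q
  | n + 1 => fun k =>
      if k % 2 = 0 then dyadicNet mid p q n (k / 2)
      else mid n (dyadicNet mid p q n (k / 2)) (dyadicNet mid p q n (k / 2 + 1))

section DyadicNet

variable {mid : ℕ → X → X → X} {p q : X}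

theorem dyadicNet_succ_two_mul (n k : ℕ) :
    dyadicNet mid p q (n + 1) (2 * k) = dyadicNet mid p q n k := by
  simp [dyadicNet]

theorem dyadicNet_succ_two_mul_add_one (n k : ℕ) :
    dyadicNet mid p q (n + 1) (2 * k + 1) =
      mid n (dyadicNet mid p q n k) (dyadicNet mid p q n (k + 1)) := by
  simp [dyadicNet, Nat.add_mod, show (2 * k + 1) / 2 = k by omega]

theorem dyadicNet_consecutive {P : ℕ → X → X → Prop} (h₀ : P 0 p q)
    (hmid : ∀ n a b, P n a b → P (n + 1) a (mid n a b) ∧ P (n + 1) (mid n a b) b) :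
    ∀ n k, k < 2 ^ n → P n (dyadicNet mid p q n k) (dyadicNet mid p q n (k + 1)) := by
  intro n
  induction n with
  | zero => simpa [dyadicNet] using h₀
  | succ n ih =>
    intro k hk
    obtain ⟨j, rfl | rfl⟩ := Nat.even_or_odd' k
    · rw [dyadicNet_succ_two_mul_add_one, dyadicNet_succ_two_mul]
      exact (hmid n _ _ (ih j (by omega))).1
    · rw [show 2 * j + 1 + 1 = 2 * (j + 1) by ring, dyadicNet_succ_two_mul,
        dyadicNet_succ_two_mul_add_one]
      exact (hmid n _ _ (ih j (by omega))).2

end DyadicNet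

theorem Nat.two_mul_floor_le_floor_two_mul {x : ℝ} (hx : 0 ≤ x) : 2 * ⌊x⌋₊ ≤ ⌊2 * x⌋₊ :=
  Nat.le_floor <| by push_cast; linarith [Nat.floor_le hx]

theorem Nat.floor_two_mul_le {x : ℝ} (hx : 0 ≤ x) : ⌊2 * x⌋₊ ≤ 2 * ⌊x⌋₊ + 1 := by
  have h : (⌊2 * x⌋₊ : ℝ) < 2 * ⌊x⌋₊ + 2 := by
    linarith [Nat.floor_le (by positivity : 0 ≤ 2 * x), Nat.lt_floor_add_one x]
  exact Nat.lt_succ_iff.1 (by exact_mod_cast h)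

theorem Nat.floor_mul_two_pow_le {t : ℝ} (ht : t ≤ 1) (n : ℕ) : ⌊t * 2 ^ n⌋₊ ≤ 2 ^ n :=
  Nat.floor_le_of_le <| by push_cast; nlinarith [pow_pos (two_pos : (0 : ℝ) < 2) n]

theorem dyadic_apply_zero {g : ℕ → ℕ → X} (hrefine : ∀ n k, g (n + 1) (2 * k) = g n k) (n : ℕ) :
    g n 0 = g 0 0 := by
  induction n with
  | zero => rfl
  | succ n ih => exact (hrefine n 0).trans ih

theorem dyadic_apply_two_pow {g : ℕ → ℕ → X} (hrefine : ∀ n k, g (n + 1) (2 * k) = g n k) (n : ℕ) :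
    g n (2 ^ n) = g 0 1 := by
  induction n with
  | zero => rfl
  | succ n ih => rw [pow_succ', hrefine, ih]

section DyadicPath

variable [MetricSpace X] {g : ℕ → ℕ → X} {K : ℝ≥0}

theorem dist_dyadic_le (hstep : ∀ n k, k < 2 ^ n → dist (g n k) (g n (k + 1)) ≤ K / 2 ^ n)
    {n k l : ℕ} (hkl : k ≤ l) (hl : l ≤ 2 ^ n) :
    dist (g n k) (g n l) ≤ ((l : ℝ) - k) * (K / 2 ^ n) :=
  (dist_le_Ico_sum_of_dist_le (d := fun _ => K / 2 ^ n) hkl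
    fun {i} _ hi => hstep n i (hi.trans_le hl)).trans_eq <| by simp [Nat.cast_sub hkl]

theorem cauchySeq_dyadic (hrefine : ∀ n k, g (n + 1) (2 * k) = g n k)
    (hstep : ∀ n k, k < 2 ^ n → dist (g n k) (g n (k + 1)) ≤ K / 2 ^ n)
    {t : ℝ} (ht : t ∈ Icc (0 : ℝ) 1) : CauchySeq fun n => g n ⌊t * 2 ^ n⌋₊ := by
  refine cauchySeq_of_le_geometric_two (C := K) fun n => ?_
  have hdouble : t * 2 ^ (n + 1) = 2 * (t * 2 ^ n) := by ring
  have hx : 0 ≤ t * 2 ^ n := mul_nonneg ht.1 (by positivity)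
  have hlo := Nat.two_mul_floor_le_floor_two_mul hx
  have hhi := Nat.floor_two_mul_le hx
  rw [← hdouble] at hlo hhi
  rw [← hrefine]
  refine (dist_dyadic_le hstep hlo (Nat.floor_mul_two_pow_le ht.2 _)).trans ?_
  have hgap : (⌊t * 2 ^ (n + 1)⌋₊ : ℝ) - ↑(2 * ⌊t * 2 ^ n⌋₊) ≤ 1 := by
    have : (⌊t * 2 ^ (n + 1)⌋₊ : ℝ) ≤ ↑(2 * ⌊t * 2 ^ n⌋₊ + 1) := by exact_mod_cast hhi
    push_cast at this ⊢
    linarith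
  calc _ ≤ 1 * ((K : ℝ) / 2 ^ (n + 1)) := by gcongr
    _ = K / 2 / 2 ^ n := by ring

theorem dist_dyadic_floor_le (hstep : ∀ n k, k < 2 ^ n → dist (g n k) (g n (k + 1)) ≤ K / 2 ^ n)
    {s t : ℝ} (hs : 0 ≤ s) (hst : s ≤ t) (ht : t ≤ 1) (n : ℕ) :
    dist (g n ⌊s * 2 ^ n⌋₊) (g n ⌊t * 2 ^ n⌋₊) ≤ K * (t - s) + K / 2 ^ n := by
  have hfloor : ⌊s * 2 ^ n⌋₊ ≤ ⌊t * 2 ^ n⌋₊ := Nat.floor_le_floor (by gcongr)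
  refine (dist_dyadic_le hstep hfloor (Nat.floor_mul_two_pow_le ht n)).trans ?_
  have hgap : (⌊t * 2 ^ n⌋₊ : ℝ) - ⌊s * 2 ^ n⌋₊ ≤ (t - s) * 2 ^ n + 1 := by
    linarith [Nat.floor_le (mul_nonneg (hs.trans hst) (by positivity) : 0 ≤ t * 2 ^ n),
      Nat.lt_floor_add_one (s * 2 ^ n)]
  calc _ ≤ ((t - s) * 2 ^ n + 1) * ((K : ℝ) / 2 ^ n) := by gcongr
    _ = K * (t - s) + K / 2 ^ n := by field_simp

theorem exists_lipschitzOnWith_of_dyadic [CompleteSpace X]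
    (hrefine : ∀ n k, g (n + 1) (2 * k) = g n k)
    (hstep : ∀ n k, k < 2 ^ n → dist (g n k) (g n (k + 1)) ≤ K / 2 ^ n) :
    ∃ γ : ℝ → X, γ 0 = g 0 0 ∧ γ 1 = g 0 1 ∧ LipschitzOnWith K γ (Icc 0 1) := by
  have hlim : ∀ t ∈ Icc (0 : ℝ) 1, ∃ x, Tendsto (fun n => g n ⌊t * 2 ^ n⌋₊) atTop (𝓝 x) :=
    fun t ht => cauchySeq_tendsto_of_complete (cauchySeq_dyadic hrefine hstep ht)
  have : Nonempty X := ⟨g 0 0⟩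
  choose! γ hγ using hlim
  have hmono : ∀ s ∈ Icc (0 : ℝ) 1, ∀ t ∈ Icc (0 : ℝ) 1, s ≤ t →
      dist (γ s) (γ t) ≤ K * (t - s) := by
    intro s hs t ht hst
    have hbound : Tendsto (fun n : ℕ => K * (t - s) + K / 2 ^ n) atTop (𝓝 (K * (t - s) + 0)) :=
      tendsto_const_nhds.add <| tendsto_const_nhds.div_atTop <|
        tendsto_pow_atTop_atTop_of_one_lt one_lt_two
    simpa using le_of_tendsto_of_tendsto' ((hγ s hs).dist (hγ t ht)) hbound
      (dist_dyadic_floor_le hstep hs.1 hst ht.2)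
  refine ⟨γ, ?_, ?_, LipschitzOnWith.of_dist_le_mul fun s hs t ht => ?_⟩
  · exact tendsto_nhds_unique (hγ 0 ⟨le_rfl, zero_le_one⟩) (by simp [dyadic_apply_zero hrefine])
  · have hfloor (n : ℕ) : ⌊(1 : ℝ) * 2 ^ n⌋₊ = 2 ^ n := by
      rw [one_mul]
      exact_mod_cast Nat.floor_natCast (R := ℝ) (2 ^ n)
    refine tendsto_nhds_unique (hγ 1 ⟨zero_le_one, le_rfl⟩) ?_
    simpa only [hfloor, dyadic_apply_two_pow hrefine] using tendsto_const_nhds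
  rcases le_total s t with hst | hts
  · simpa [Real.dist_eq, abs_of_nonpos (sub_nonpos.2 hst)] using hmono s hs t ht hst
  · simpa [dist_comm, Real.dist_eq, abs_of_nonneg (sub_nonneg.2 hts)] using hmono t ht s hs hts

end DyadicPath

section Idempotent

theorem exists_near_midpoint_chainMetric [PseudoEMetricSpace X]
    (h : ∀ p q : X, chainMetricOf (fun a b => chainMetric a b) p q ≤ chainMetric p q)
    {a b : X} {r η : ℝ} (hr : 0 ≤ r) (hη : 0 < η) (hab : chainMetric a b ≤ ENNReal.ofReal r) :
    ∃ m, chainMetric a m ≤ ENNReal.ofReal (r / 2 + η) ∧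
      chainMetric m b ≤ ENNReal.ofReal (r / 2 + η) := by
  have hlt : chainDistOf (fun a b => chainMetric a b) (ENNReal.ofReal (η / 2)) a b <
      ENNReal.ofReal (r + η / 2) :=
    calc _ ≤ chainMetric a b := (chainDistOf_le_chainMetricOf (by positivity) a b).trans (h a b)
      _ ≤ ENNReal.ofReal r := hab
      _ < ENNReal.ofReal (r + η / 2) :=
        (ENNReal.ofReal_lt_ofReal_iff (by positivity)).2 (by linarith)
  obtain ⟨n, x, hx, hL⟩ := exists_isChainOf_chainLengthOf_lt hlt
  obtain ⟨m, ham, hmb⟩ := exists_near_midpoint_of_isChainOf chainMetric_self chainMetric_triangle hx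
  have hL2 : chainLengthOf (fun a b => chainMetric a b) x n / 2 ≤
      ENNReal.ofReal ((r + η / 2) / 2) := by
    rw [ENNReal.ofReal_div_of_pos two_pos, ENNReal.ofReal_ofNat]
    exact ENNReal.div_le_div_right hL.le 2
  refine ⟨m, ham.trans (hL2.trans (ENNReal.ofReal_le_ofReal (by linarith))), hmb.trans ?_⟩
  calc _ ≤ ENNReal.ofReal (η / 2) + ENNReal.ofReal ((r + η / 2) / 2) := add_le_add_right hL2 _
    _ = ENNReal.ofReal (η / 2 + (r + η / 2) / 2) :=
      (ENNReal.ofReal_add (by positivity) (by positivity)).symm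
    _ ≤ _ := ENNReal.ofReal_le_ofReal (by linarith)

variable [MetricSpace X] [CompleteSpace X]

theorem exists_lipschitzOnWith_of_chainMetric_lt
    (h : ∀ p q : X, chainMetricOf (fun a b => chainMetric a b) p q ≤ chainMetric p q)
    {p q : X} {K : ℝ≥0} (hK : chainMetric p q < K) :
    ∃ γ : ℝ → X, γ 0 = p ∧ γ 1 = q ∧ LipschitzOnWith K γ (Icc 0 1) := by
  set d := (chainMetric p q).toReal
  set δ : ℝ := K - d
  have hd : chainMetric p q = ENNReal.ofReal d := (ENNReal.ofReal_toReal hK.ne_top).symm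
  have hδ : 0 < δ := by
    rw [hd, ← ENNReal.ofReal_coe_nnreal, ENNReal.ofReal_lt_ofReal_iff'] at hK
    linarith [hK.1]
  -- step bound at level `n`: `r 0 = d` and `r (n + 1) = r n / 2 + δ / 4 ^ (n + 1)`
  set r : ℕ → ℝ := fun n => K / 2 ^ n - δ / 4 ^ n
  have hr (n : ℕ) : 0 ≤ r n := by
    have : δ / 4 ^ n ≤ δ / 2 ^ n := by gcongr; norm_num
    have : d / 2 ^ n = K / 2 ^ n - δ / 2 ^ n := by simp only [δ]; ring
    have : 0 ≤ d / 2 ^ n := by positivity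
    simp only [r]
    linarith
  have hmid (n : ℕ) (a b : X) : ∃ m, chainMetric a b ≤ ENNReal.ofReal (r n) →
      chainMetric a m ≤ ENNReal.ofReal (r (n + 1)) ∧
        chainMetric m b ≤ ENNReal.ofReal (r (n + 1)) := by
    by_cases hab : chainMetric a b ≤ ENNReal.ofReal (r n)
    · have hr' : r n / 2 + δ / 4 ^ (n + 1) = r (n + 1) := by simp only [r]; ring
      simpa only [hr', imp_iff_right hab] using
        exists_near_midpoint_chainMetric h (hr n) (η := δ / 4 ^ (n + 1)) (by positivity) hab
    · exact ⟨a, fun hab' => absurd hab' hab⟩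
  choose mid hmid using hmid
  have hnet := dyadicNet_consecutive (mid := mid) (p := p) (q := q)
    (P := fun n a b => chainMetric a b ≤ ENNReal.ofReal (r n)) (by simpa [r, δ] using hd.le)
    fun n a b hab => hmid n a b hab
  obtain ⟨γ, h0, h1, hγ⟩ := exists_lipschitzOnWith_of_dyadic (K := K)
    (dyadicNet_succ_two_mul (mid := mid) (p := p) (q := q)) fun n k hk => by
      refine ((edist_le_ofReal (hr n)).1 ((edist_le_chainMetric _ _).trans (hnet n k hk))).trans ?_
      have : 0 ≤ δ / 4 ^ n := by positivity
      simp only [r]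
      linarith
  exact ⟨γ, by simpa [dyadicNet] using h0, by simpa [dyadicNet] using h1, hγ⟩

theorem lengthMetric_le_chainMetric
    (h : ∀ p q : X, chainMetricOf (fun a b => chainMetric a b) p q ≤ chainMetric p q)
    (p q : X) : lengthMetric p q ≤ chainMetric p q := by
  refine ENNReal.le_of_forall_pos_le_add fun ε hε hfin => ?_
  have hK : chainMetric p q < ↑((chainMetric p q).toNNReal + ε) := by
    rw [ENNReal.coe_add, ENNReal.coe_toNNReal hfin.ne]
    exact ENNReal.lt_add_right hfin.ne (by simpa using hε.ne')
  obtain ⟨γ, rfl, rfl, hγ⟩ := exists_lipschitzOnWith_of_chainMetric_lt h hK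
  simpa [ENNReal.coe_toNNReal hfin.ne] using lengthMetric_le_of_lipschitzOnWith hγ

end Idempotent

/-- if `(X,d)` is complete and `(d_0)_0 = d_0`, then `d_0 = d̄`. -/
theorem chainMetric_eq_lengthMetric_of_idempotent {X : Type*} [MetricSpace X]
    [CompleteSpace X]
    (h : ∀ p q : X, chainMetricOf (fun a b => chainMetric a b) p q = chainMetric p q) :
    ∀ p q : X, chainMetric p q = lengthMetric p q := fun p q =>
  le_antisymm (chainMetric_le_lengthMetric p q)
    (lengthMetric_le_chainMetric (fun p q => (h p q).le) p q)
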